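/- The co-word problem of the free group FG(X) of finite rank, i.e. the language { u # v̄ : u, v ∈ (X^±)*, uv⁻¹ ≠ 1 in FG(X) } (equivalently { w ∈ (X^± ∪ {#})* with exactly one # : the word obtained by deleting # does not reduce to 1 in FG(X) }), is context-free. -/

import Mathlib

/-- The symmetric alphabet `X^± = X ∪ X̄`, encoded as pairs (letter, sign). -/
abbrev Letter (X : Type) : Type := X × Bool

/-- Formal inverse of a letter. -/
def linv {X : Type} (a : Letter X) : Letter X := (a.1, !a.2)

/-- `wordInv v` is `v̄`: the reverse of `v` with every letter replaced by its inverse. -/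
def wordInv {X : Type} (v : List (Letter X)) : List (Letter X) := v.reverse.map linv

/-- The vertex set of the Munn tree of `w`: reductions of all prefixes of `w` in FG(X). -/
def munn {X : Type} (w : List (Letter X)) : Set (FreeGroup X) :=
  {g | ∃ p : List (Letter X), p <+: w ∧ FreeGroup.mk p = g}

/-- A word represents an idempotent of FIM(X) iff it reduces to 1 in FG(X). -/
def IsIdemWord {X : Type} (w : List (Letter X)) : Prop := FreeGroup.mk w = 1

/-- A word is reduced iff it has no adjacent mutually inverse letters. -/
def Reduced {X : Type} (w : List (Letter X)) : Prop :=
  List.Chain' (fun a b => b ≠ linv a) w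

/-- The Munn tree of `w` contains the edge from (the reduced word) `p` to `p · a`. -/
def EdgeIn {X : Type} (w : List (Letter X)) (p : List (Letter X)) (a : Letter X) : Prop :=
  Reduced (p ++ [a]) ∧ FreeGroup.mk p ∈ munn w ∧ FreeGroup.mk (p ++ [a]) ∈ munn w

/-- An idempotent word avoids `x` iff its Munn tree omits the edge `(ε, x)`. -/
def Avoids {X : Type} (w : List (Letter X)) (x : Letter X) : Prop := ¬ EdgeIn w [] x

/-- Equality in the free inverse monoid FIM(X): equality of Munn trees. -/
def EqFIM {X : Type} (u v : List (Letter X)) : Prop :=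
  FreeGroup.mk u = FreeGroup.mk v ∧ munn u = munn v

/-- The alphabet `X^± ∪ {#}`. -/
abbrev HSym (X : Type) : Type := Letter X ⊕ Unit

/-- The hashSym symbol. -/
def hashSym {X : Type} : HSym X := Sum.inr ()

/-- `encode u v = u # v̄`. -/
def encode {X : Type} (u v : List (Letter X)) : List (HSym X) :=
  u.map Sum.inl ++ hashSym :: (wordInv v).map Sum.inl


instance {T N : Type} [DecidableEq T] [DecidableEq N] : DecidableEq (ContextFreeRule T N) :=
  fun a b => decidable_of_iff (a.input = b.input ∧ a.output = b.output)
    (by cases a; cases b; simp)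

/-- Interleaving `e₁x₁e₂x₂⋯e_mx_m`. -/
def interE {X : Type} (es : List (List (Letter X))) (xs : List (Letter X)) : List (Letter X) :=
  (List.zipWith (fun e x => e ++ [x]) es xs).flatten

/-- Interleaving `y₁f₁y₂f₂⋯y_nf_n`. -/
def interF {X : Type} (ys : List (Letter X)) (fs : List (List (Letter X))) : List (Letter X) :=
  (List.zipWith (fun y f => y :: f) ys fs).flatten

/-- Derivability of a terminal word from a given nonterminal of a grammar. -/
def DerivesFrom {T : Type} (g : ContextFreeGrammar T) (n : g.NT) (w : List T) : Prop :=
  g.Derives [Symbol.nonterminal n] (w.map Symbol.terminal)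

/-!
A word over `X^±` is nontrivial in `FG(X)` iff it factors as `e₀ x₁ e₁ x₂ ⋯ x_n e_n` with `n ≥ 1`,
every `e_i` trivial and `x₁ ⋯ x_n` reduced: the `x_i` are the letters that survive in the reduced
form. Trivial words are generated by `I → ε | a I a⁻¹ I`, and the factorisation is generated from
left to right by nonterminals remembering the last surviving letter, so the co-word problem
`{w | w ≠ 1}` is context-free. Context-free languages stay context-free when a marker `#` is
inserted at an arbitrary position (copy the grammar with one marked nonterminal, the one whose
yield contains `#`), and `u # v̄` is in the marked language iff `u v̄ ≠ 1`, i.e. `u ≠ v`.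
-/

open Symbol

namespace Symbol

variable {T N : Type*}

def language (L : N → Language T) : Symbol T N → Language T
  | terminal t => {[t]}
  | nonterminal n => L n

@[simp] lemma mem_language_terminal {L : N → Language T} {t : T} {w : List T} :
    w ∈ (terminal t : Symbol T N).language L ↔ w = [t] := Iff.rfl

@[simp] lemma language_nonterminal (L : N → Language T) (n : N) :
    (nonterminal n : Symbol T N).language L = L n := rfl

lemma mem_prod_language_map_terminal (L : N → Language T) (w : List T) :
    w ∈ ((w.map terminal).map (language (N := N) L)).prod := by
  induction w with
  | nil => exact Language.nil_mem_one
  | cons t w ih => exact Language.append_mem_mul (l := {[t]}) rfl ih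

end Symbol

namespace ContextFreeGrammar

variable {T : Type*} {g : ContextFreeGrammar T}

lemma derives_of_mem_rules {r : ContextFreeRule T g.NT} (hr : r ∈ g.rules) :
    g.Derives [nonterminal r.input] r.output :=
  Produces.single ⟨r, hr, ContextFreeRule.Rewrites.input_output⟩

lemma Derives.cons {s : Symbol T g.NT} {u v w : List (Symbol T g.NT)} (hs : g.Derives [s] v)
    (hu : g.Derives u w) : g.Derives (s :: u) (v ++ w) :=
  (hs.append_right u).trans (hu.append_left v)

lemma Produces.exists_of_singleton {n : g.NT} {u : List (Symbol T g.NT)}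
    (h : g.Produces [nonterminal n] u) : ∃ r ∈ g.rules, r.input = n ∧ r.output = u := by
  obtain ⟨r, hr, hrw⟩ := h
  rcases hrw with _ | ⟨_, hrw⟩
  · exact ⟨r, hr, rfl, (List.append_nil _).symm⟩
  · cases hrw

section Soundness

variable {L : g.NT → Language T}
  (hL : ∀ r ∈ g.rules, ∀ w ∈ (r.output.map (Symbol.language L)).prod, w ∈ L r.input)
include hL

theorem Produces.prod_language_le {u v : List (Symbol T g.NT)} (h : g.Produces u v) :
    (v.map (Symbol.language L)).prod ≤ (u.map (Symbol.language L)).prod := by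
  obtain ⟨r, hr, hrw⟩ := h
  obtain ⟨p, q, rfl, rfl⟩ := hrw.exists_parts
  simp only [List.map_append, List.prod_append, List.map_singleton, List.prod_singleton,
    Symbol.language_nonterminal]
  exact mul_le_mul' (mul_le_mul' le_rfl (hL r hr)) le_rfl

theorem Derives.prod_language_le {u v : List (Symbol T g.NT)} (h : g.Derives u v) :
    (v.map (Symbol.language L)).prod ≤ (u.map (Symbol.language L)).prod := by
  induction h with
  | refl => exact le_rfl
  | tail _ hp ih => exact (hp.prod_language_le hL).trans ih

theorem language_le_of_forall_rule : g.language ≤ L g.initial := fun w hw => by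
  simpa using Derives.prod_language_le hL hw (Symbol.mem_prod_language_map_terminal L w)

end Soundness

end ContextFreeGrammar

namespace Symbol

variable {T N : Type*}

def unmarked : Symbol T N → Symbol (T ⊕ Unit) (N ⊕ N)
  | terminal t => terminal (.inl t)
  | nonterminal n => nonterminal (.inl n)

def marker : Symbol (T ⊕ Unit) (N ⊕ N) := terminal (.inr ())

def eraseMark : Symbol (T ⊕ Unit) (N ⊕ N) → List (Symbol T N)
  | terminal (.inl t) => [terminal t]
  | terminal (.inr _) => []
  | nonterminal n => [nonterminal (n.elim id id)]

def isMark : Symbol (T ⊕ Unit) (N ⊕ N) → Bool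
  | terminal t => t.isRight
  | nonterminal n => n.isRight

@[simp] lemma unmarked_nonterminal (n : N) :
    (nonterminal n : Symbol T N).unmarked = nonterminal (.inl n) :=
  rfl

@[simp] lemma unmarked_comp_terminal :
    (unmarked ∘ terminal : T → Symbol (T ⊕ Unit) (N ⊕ N)) = terminal ∘ Sum.inl :=
  rfl

@[simp] lemma eraseMark_unmarked (x : Symbol T N) : x.unmarked.eraseMark = [x] := by
  cases x <;> rfl

@[simp] lemma isMark_unmarked (x : Symbol T N) : x.unmarked.isMark = false := by
  cases x <;> rfl

@[simp] lemma isMark_comp_terminal :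
    (isMark ∘ (terminal : T ⊕ Unit → Symbol (T ⊕ Unit) (N ⊕ N))) = Sum.isRight :=
  rfl

@[simp] lemma isMark_terminal (t : T ⊕ Unit) :
    (terminal t : Symbol _ (N ⊕ N)).isMark = t.isRight :=
  rfl

@[simp] lemma isMark_nonterminal (n : N ⊕ N) :
    (nonterminal n : Symbol (T ⊕ Unit) _).isMark = n.isRight :=
  rfl

@[simp] lemma flatMap_eraseMark_map_unmarked (u : List (Symbol T N)) :
    (u.map unmarked).flatMap eraseMark = u := by
  simp [List.flatMap_map]

inductive IsMarking : List (Symbol T N) → List (Symbol (T ⊕ Unit) (N ⊕ N)) → Prop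
  | marker (u : List (Symbol T N)) : IsMarking u (marker :: u.map unmarked)
  | mark (n : N) (u : List (Symbol T N)) :
      IsMarking (nonterminal n :: u) (nonterminal (.inr n) :: u.map unmarked)
  | cons (x : Symbol T N) {u v} : IsMarking u v → IsMarking (x :: u) (x.unmarked :: v)

namespace IsMarking

variable {u u₁ u₂ : List (Symbol T N)} {v : List (Symbol (T ⊕ Unit) (N ⊕ N))}

lemma append_right (h : IsMarking u v) (w : List (Symbol T N)) :
    IsMarking (u ++ w) (v ++ w.map unmarked) := by
  induction h with
  | marker u => simpa using IsMarking.marker (u ++ w)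
  | mark n u => simpa using IsMarking.mark n (u ++ w)
  | cons x _ ih => exact .cons x ih

lemma append_left (w : List (Symbol T N)) (h : IsMarking u v) :
    IsMarking (w ++ u) (w.map unmarked ++ v) := by
  induction w with
  | nil => exact h
  | cons x w ih => exact .cons x ih

lemma of_append (h : IsMarking (u₁ ++ u₂) v) :
    (∃ v₁, IsMarking u₁ v₁ ∧ v = v₁ ++ u₂.map unmarked) ∨
      (∃ v₂, IsMarking u₂ v₂ ∧ v = u₁.map unmarked ++ v₂) := by
  induction u₁ generalizing v with
  | nil => exact .inr ⟨v, h, rfl⟩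
  | cons x u₁ ih =>
    rcases h with _ | ⟨n, _⟩ | ⟨_, h⟩
    · exact .inl ⟨_, .marker _, by simp⟩
    · exact .inl ⟨_, .mark n _, by simp⟩
    · rcases ih h with ⟨v₁, h₁, rfl⟩ | ⟨v₂, h₂, rfl⟩
      · exact .inl ⟨_, h₁.cons x, rfl⟩
      · exact .inr ⟨v₂, h₂, rfl⟩

lemma flatMap_eraseMark (h : IsMarking u v) : v.flatMap eraseMark = u := by
  induction h with
  | marker u => simp [Symbol.marker, eraseMark]
  | mark n u => simp [eraseMark]
  | cons x _ ih => simp [ih]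

lemma countP_isMark (h : IsMarking u v) : v.countP isMark = 1 := by
  induction h with
  | marker u | mark n u => simp [Symbol.marker, List.countP_cons]
  | cons x _ ih => simp [ih]

end IsMarking

def markings : List (Symbol T N) → List (List (Symbol (T ⊕ Unit) (N ⊕ N)))
  | [] => [[marker]]
  | x :: u => (marker :: (x :: u).map unmarked) ::
      ((match x with
        | terminal _ => []
        | nonterminal n => [nonterminal (.inr n) :: u.map unmarked]) ++
        (markings u).map (x.unmarked :: ·))

lemma mem_markings {u : List (Symbol T N)} {v : List (Symbol (T ⊕ Unit) (N ⊕ N))} :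
    v ∈ markings u ↔ IsMarking u v := by
  induction u generalizing v with
  | nil =>
    refine ⟨fun h => ?_, fun h => ?_⟩
    · rw [List.mem_singleton.mp h]; exact .marker []
    · cases h; exact List.mem_singleton_self _
  | cons x u ih =>
    constructor
    · intro h
      rcases List.mem_cons.mp h with rfl | h
      · exact .marker _
      rcases List.mem_append.mp h with h | h
      · cases x with
        | terminal t => cases h
        | nonterminal n => rw [List.mem_singleton.mp h]; exact .mark n u
      · obtain ⟨v, hv, rfl⟩ := List.mem_map.mp h
        exact .cons x (ih.mp hv)
    · rintro (_ | ⟨n, _⟩ | ⟨_, h⟩)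
      · exact List.mem_cons_self
      · exact List.mem_cons_of_mem _ (List.mem_append_left _ List.mem_cons_self)
      · exact List.mem_cons_of_mem _ (List.mem_append_right _ (List.mem_map_of_mem (ih.mpr h)))

end Symbol

namespace ContextFreeGrammar

variable {T : Type*} (g : ContextFreeGrammar T)

open Classical in
noncomputable def markedRules : Finset (ContextFreeRule (T ⊕ Unit) (g.NT ⊕ g.NT)) :=
  g.rules.biUnion fun r =>
    insert ⟨.inl r.input, r.output.map unmarked⟩
      ((markings r.output).map (⟨.inr r.input, ·⟩)).toFinset

/-- The nonterminal `.inr n` is a copy of `n` whose yield contains the marker. -/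
noncomputable abbrev withMarker : ContextFreeGrammar (T ⊕ Unit) :=
  ⟨g.NT ⊕ g.NT, .inr g.initial, g.markedRules⟩

variable {g}

lemma mem_markedRules {r' : ContextFreeRule (T ⊕ Unit) (g.NT ⊕ g.NT)} :
    r' ∈ g.markedRules ↔ ∃ r ∈ g.rules, r' = ⟨.inl r.input, r.output.map unmarked⟩ ∨
      ∃ v, IsMarking r.output v ∧ r' = ⟨.inr r.input, v⟩ := by
  simp only [markedRules, Finset.mem_biUnion, Finset.mem_insert, List.mem_toFinset, List.mem_map,
    mem_markings]
  simp only [eq_comm]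

lemma withMarker_produces_of_mem_rules {r : ContextFreeRule T g.NT} (hr : r ∈ g.rules)
    (p q : List (Symbol (T ⊕ Unit) (g.NT ⊕ g.NT))) :
    g.withMarker.Produces (p ++ [nonterminal (.inl r.input)] ++ q)
      (p ++ r.output.map unmarked ++ q) :=
  ⟨⟨.inl r.input, r.output.map unmarked⟩, mem_markedRules.mpr ⟨r, hr, .inl rfl⟩,
    ContextFreeRule.rewrites_of_exists_parts _ p q⟩

lemma withMarker_produces_of_isMarking {r : ContextFreeRule T g.NT} (hr : r ∈ g.rules)
    {v : List (Symbol (T ⊕ Unit) (g.NT ⊕ g.NT))} (hv : IsMarking r.output v)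
    (p q : List (Symbol (T ⊕ Unit) (g.NT ⊕ g.NT))) :
    g.withMarker.Produces (p ++ [nonterminal (.inr r.input)] ++ q) (p ++ v ++ q) :=
  ⟨⟨.inr r.input, v⟩, mem_markedRules.mpr ⟨r, hr, .inr ⟨v, hv, rfl⟩⟩,
    ContextFreeRule.rewrites_of_exists_parts _ p q⟩

theorem Produces.withMarker_eraseMark {v v' : List (Symbol (T ⊕ Unit) (g.NT ⊕ g.NT))}
    (h : g.withMarker.Produces v v') :
    g.Produces (v.flatMap eraseMark) (v'.flatMap eraseMark) ∧
      v'.countP isMark = v.countP isMark := by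
  obtain ⟨r', hr', hrw⟩ := h
  obtain ⟨p, q, rfl, rfl⟩ := hrw.exists_parts
  obtain ⟨r, hr, rfl | ⟨w, hw, rfl⟩⟩ := mem_markedRules.mp hr'
  · refine ⟨⟨r, hr, ContextFreeRule.rewrites_iff.mpr
      ⟨p.flatMap eraseMark, q.flatMap eraseMark, by simp [eraseMark], by simp⟩⟩, by simp⟩
  · refine ⟨⟨r, hr, ContextFreeRule.rewrites_iff.mpr ⟨p.flatMap eraseMark, q.flatMap eraseMark,
      by simp [eraseMark], by simp [hw.flatMap_eraseMark]⟩⟩, ?_⟩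
    simp [hw.countP_isMark, List.countP_cons]
    omega

theorem Derives.withMarker_eraseMark {v v' : List (Symbol (T ⊕ Unit) (g.NT ⊕ g.NT))}
    (h : g.withMarker.Derives v v') :
    g.Derives (v.flatMap eraseMark) (v'.flatMap eraseMark) ∧
      v'.countP isMark = v.countP isMark := by
  induction h with
  | refl => exact ⟨Derives.refl _, rfl⟩
  | tail _ hp ih =>
    obtain ⟨hp₁, hp₂⟩ := hp.withMarker_eraseMark
    exact ⟨ih.1.trans_produces hp₁, hp₂.trans ih.2⟩

theorem Produces.exists_isMarking {u u' : List (Symbol T g.NT)} (h : g.Produces u u')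
    {v' : List (Symbol (T ⊕ Unit) (g.NT ⊕ g.NT))} (hv' : IsMarking u' v') :
    ∃ v, IsMarking u v ∧ g.withMarker.Produces v v' := by
  obtain ⟨r, hr, hrw⟩ := h
  obtain ⟨p, q, rfl, rfl⟩ := hrw.exists_parts
  rcases hv'.of_append with ⟨v₁, hv₁, rfl⟩ | ⟨vq, hvq, rfl⟩
  · rcases hv₁.of_append with ⟨vp, hvp, rfl⟩ | ⟨vo, hvo, rfl⟩
    · refine ⟨vp ++ [nonterminal (.inl r.input)] ++ q.map unmarked, ?_,
        withMarker_produces_of_mem_rules hr _ _⟩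
      convert hvp.append_right ([nonterminal r.input] ++ q) using 1 <;> simp
    · refine ⟨p.map unmarked ++ [nonterminal (.inr r.input)] ++ q.map unmarked, ?_,
        withMarker_produces_of_isMarking hr hvo _ _⟩
      simpa using (IsMarking.mark r.input q).append_left p
  · refine ⟨(p ++ [nonterminal r.input]).map unmarked ++ vq,
      hvq.append_left (p ++ [nonterminal r.input]), ?_⟩
    simpa using withMarker_produces_of_mem_rules hr (p.map unmarked) vq

theorem Derives.exists_isMarking {u : List (Symbol T g.NT)} {s t : List T}
    (h : g.Derives u ((s ++ t).map terminal)) :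
    ∃ v, IsMarking u v ∧
      g.withMarker.Derives v ((s.map Sum.inl ++ Sum.inr () :: t.map Sum.inl).map terminal) := by
  induction h using Relation.ReflTransGen.head_induction_on with
  | refl =>
    refine ⟨_, List.map_append ▸
      (IsMarking.marker (t.map terminal)).append_left (s.map terminal), ?_⟩
    simpa [Symbol.marker] using Derives.refl _
  | head hp _ ih =>
    obtain ⟨v₁, hv₁, hd⟩ := ih
    obtain ⟨v, hv, hp'⟩ := hp.exists_isMarking hv₁
    exact ⟨v, hv, hp'.trans_derives hd⟩

end ContextFreeGrammar

theorem List.exists_eq_map_inl_of_countP_isRight_eq_zero {α β : Type*} :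
    ∀ {w : List (α ⊕ β)}, w.countP (·.isRight) = 0 → ∃ s : List α, w = s.map Sum.inl
  | [], _ => ⟨[], rfl⟩
  | .inl a :: w, h => by
    obtain ⟨s, rfl⟩ := exists_eq_map_inl_of_countP_isRight_eq_zero (by simpa using h)
    exact ⟨a :: s, rfl⟩
  | .inr _ :: _, h => by simp at h

theorem List.exists_eq_append_inr_of_countP_isRight_eq_one {α : Type*} :
    ∀ {w : List (α ⊕ Unit)}, w.countP (·.isRight) = 1 →
      ∃ s t : List α, w = s.map Sum.inl ++ Sum.inr () :: t.map Sum.inl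
  | [], h => by simp at h
  | .inl a :: w, h => by
    obtain ⟨s, t, rfl⟩ := exists_eq_append_inr_of_countP_isRight_eq_one (by simpa using h)
    exact ⟨a :: s, t, rfl⟩
  | .inr () :: w, h => by
    rw [List.countP_cons] at h
    obtain ⟨t, rfl⟩ := exists_eq_map_inl_of_countP_isRight_eq_zero (by simpa using h)
    exact ⟨[], t, rfl⟩

theorem Language.IsContextFree.insertMarker {T : Type*} {L : Language T} (h : L.IsContextFree) :
    Language.IsContextFree
      {w | ∃ s t, s ++ t ∈ L ∧ w = s.map Sum.inl ++ Sum.inr () :: t.map Sum.inl} := by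
  obtain ⟨g, rfl⟩ := h
  refine ⟨g.withMarker, Set.ext fun w => ⟨fun hw => ?_, ?_⟩⟩
  · obtain ⟨hd, hcount⟩ := ContextFreeGrammar.Derives.withMarker_eraseMark hw
    obtain ⟨s, t, rfl⟩ := List.exists_eq_append_inr_of_countP_isRight_eq_one (by simpa using hcount)
    exact ⟨s, t, by simpa [eraseMark, List.flatMap_map, ← List.map_eq_flatMap] using hd, rfl⟩
  · rintro ⟨s, t, hst, rfl⟩
    -- A marking of `[nonterminal g.initial]` may put `#` beside it, so mark the output of the
    -- first rule instead.
    rcases hst.eq_or_head with h | ⟨u, hu, hd⟩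
    · cases s <;> cases t <;> simp at h
    obtain ⟨r, hr, hin, rfl⟩ := hu.exists_of_singleton
    obtain ⟨v, hv, hd'⟩ := hd.exists_isMarking
    show g.withMarker.Derives [nonterminal (.inr g.initial)] _
    rw [← hin]
    exact (ContextFreeGrammar.withMarker_produces_of_isMarking hr hv [] []).trans_derives
      (by simpa using hd')

namespace FreeGroup

section Words

variable {α : Type*}

lemma mk_cons (a : α × Bool) (L : List (α × Bool)) : mk (a :: L) = mk [a] * mk L := by
  rw [mul_mk]; rfl

lemma mk_singleton_inv (a : α × Bool) : mk [(a.1, !a.2)] = (mk [a])⁻¹ := by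
  rw [inv_mk]; simp [invRev]

theorem red_nil_iff_mk_eq_one {L : List (α × Bool)} : Red L [] ↔ mk L = 1 := by
  rw [one_eq_mk, Red.exact]
  constructor
  · intro h; exact ⟨[], h, Red.refl⟩
  · rintro ⟨c, hL, hc⟩
    rwa [Red.nil_iff.mp hc] at hL

theorem Red.exists_eq_append_cons {w r : List (α × Bool)} {x : α × Bool} (h : Red w (x :: r)) :
    ∃ e w', w = e ++ x :: w' ∧ Red e [] ∧ Red w' r := by
  induction h using Relation.ReflTransGen.head_induction_on with
  | refl => exact ⟨[], r, rfl, Red.refl, Red.refl⟩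
  | head step _ ih =>
    obtain ⟨e, w', hL, he, hw'⟩ := ih
    cases step with | @not L₁ L₂ y b =>
    rcases List.append_eq_append_iff.mp hL with ⟨c, rfl, rfl⟩ | ⟨c, rfl, hc⟩
    · exact ⟨L₁ ++ (y, b) :: (y, !b) :: c, w', by simp, .head Red.Step.not he, hw'⟩
    · cases c with
      | nil =>
        subst hc
        refine ⟨e ++ [(y, b), (y, !b)], w', by simp, ?_, hw'⟩
        exact .head (by simpa using Red.Step.not (L₁ := e) (L₂ := [])) he
      | cons z c =>
        obtain ⟨rfl, rfl⟩ := List.cons_eq_cons.mp hc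
        exact ⟨e, c ++ (y, b) :: (y, !b) :: L₂, by simp, he, .head Red.Step.not hw'⟩

variable [DecidableEq α]

theorem mk_ne_one_of_isReduced {L : List (α × Bool)} (h : IsReduced L) (hL : L ≠ []) :
    mk L ≠ 1 := by
  intro h1
  apply hL
  rw [← h.reduce_eq, ← toWord_mk, h1, toWord_one]

theorem exists_eq_append_cons_of_reduce_eq_cons {w r : List (α × Bool)} {x : α × Bool}
    (h : reduce w = x :: r) : ∃ e w', w = e ++ x :: w' ∧ mk e = 1 ∧ reduce w' = r := by
  obtain ⟨e, w', rfl, he, hw'⟩ := Red.exists_eq_append_cons (h ▸ reduce.red)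
  have hr : IsReduced (x :: r) := by rw [← h, ← toWord_mk]; exact isReduced_toWord
  refine ⟨e, w', rfl, red_nil_iff_mk_eq_one.mp he, ?_⟩
  rw [reduce.eq_of_red hw', (show IsReduced r from hr.tail).reduce_eq]

lemma mk_append_cons_of_mk_eq_one {e : List (α × Bool)} (he : mk e = 1) (x : α × Bool)
    (w : List (α × Bool)) : mk (e ++ x :: w) = mk (x :: reduce w) := by
  rw [← mul_mk, he, one_mul, mk_cons x w, mk_cons x (reduce w), reduce.self]

end Words

section CoWordGrammar

open ContextFreeGrammar

variable {α : Type} [Fintype α] [DecidableEq α]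

inductive CoWordNT (α : Type) : Type
  | nontrivial
  | identity
  | after (a : α × Bool)
deriving DecidableEq

open CoWordNT

variable (α) in
/-- `after a` generates the words whose reduced form can follow the letter `a` without
cancellation (see `coWordLanguage`). -/
def coWordRules : Finset (ContextFreeRule (α × Bool) (CoWordNT α)) :=
  insert ⟨identity, []⟩
    ((Finset.univ.image fun a => ⟨identity,
        [terminal a, nonterminal identity, terminal (a.1, !a.2), nonterminal identity]⟩) ∪
      (Finset.univ.image fun a =>
        ⟨nontrivial, [nonterminal identity, terminal a, nonterminal (after a)]⟩) ∪
      (Finset.univ.image fun a => ⟨after a, [nonterminal identity]⟩) ∪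
      ((Finset.univ.filter fun p : (α × Bool) × (α × Bool) => p.1.1 = p.2.1 → p.1.2 = p.2.2).image
        fun p => ⟨after p.1, [nonterminal identity, terminal p.2, nonterminal (after p.2)]⟩))

variable (α) in
abbrev coWordGrammar : ContextFreeGrammar (α × Bool) :=
  ⟨CoWordNT α, nontrivial, coWordRules α⟩

lemma mem_coWordRules {r : ContextFreeRule (α × Bool) (CoWordNT α)} :
    r ∈ coWordRules α ↔
      r = ⟨identity, []⟩ ∨
      (∃ a, r = ⟨identity,
        [terminal a, nonterminal identity, terminal (a.1, !a.2), nonterminal identity]⟩) ∨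
      (∃ a, r = ⟨nontrivial, [nonterminal identity, terminal a, nonterminal (after a)]⟩) ∨
      (∃ a, r = ⟨after a, [nonterminal identity]⟩) ∨
      (∃ a x, IsReduced [a, x] ∧
        r = ⟨after a, [nonterminal identity, terminal x, nonterminal (after x)]⟩) := by
  simp only [coWordRules, Finset.mem_insert, Finset.mem_union, Finset.mem_image, Finset.mem_univ,
    true_and, Finset.mem_filter, Prod.exists, or_assoc, isReduced_cons_cons, IsReduced.singleton,
    and_true]
  simp only [eq_comm]

def coWordLanguage : CoWordNT α → Language (α × Bool)
  | nontrivial => {w | mk w ≠ 1}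
  | identity => {w | mk w = 1}
  | after a => {w | IsReduced (a :: reduce w)}

theorem coWordLanguage_closed :
    ∀ r ∈ coWordRules α, ∀ w ∈ (r.output.map (Symbol.language coWordLanguage)).prod,
      w ∈ coWordLanguage r.input := by
  intro r hr w hw
  rcases mem_coWordRules.mp hr with rfl | ⟨a, rfl⟩ | ⟨a, rfl⟩ | ⟨a, rfl⟩ | ⟨a, x, hax, rfl⟩ <;>
    simp only [List.map_cons, List.map_nil, List.prod_cons, List.prod_nil, mul_one,
      Symbol.language_nonterminal] at hw
  · show mk w = 1
    rw [(Language.mem_one w).mp hw, one_eq_mk]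
  · simp only [Language.mem_mul, Symbol.mem_language_terminal, exists_eq_left] at hw
    obtain ⟨_, ⟨e, he, _, ⟨f, hf, rfl⟩, rfl⟩, rfl⟩ := hw
    show mk (a :: (e ++ (a.1, !a.2) :: f)) = 1
    rw [show a :: (e ++ (a.1, !a.2) :: f) = [a] ++ e ++ [(a.1, !a.2)] ++ f by simp, ← mul_mk,
      ← mul_mk, ← mul_mk, he.out, hf.out, mk_singleton_inv]
    group
  · simp only [Language.mem_mul, Symbol.mem_language_terminal, exists_eq_left] at hw
    obtain ⟨e, he, _, ⟨w', hw', rfl⟩, rfl⟩ := hw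
    show mk (e ++ a :: w') ≠ 1
    rw [mk_append_cons_of_mk_eq_one he]
    exact mk_ne_one_of_isReduced hw' (List.cons_ne_nil _ _)
  · show IsReduced (a :: reduce w)
    rw [reduce.sound (hw.trans one_eq_mk)]
    exact IsReduced.singleton
  · simp only [Language.mem_mul, Symbol.mem_language_terminal, exists_eq_left] at hw
    obtain ⟨e, he, _, ⟨w', hw', rfl⟩, rfl⟩ := hw
    show IsReduced (a :: reduce (e ++ x :: w'))
    rw [reduce.sound (mk_append_cons_of_mk_eq_one he x w'), hw'.reduce_eq]
    exact isReduced_cons_cons.mpr ⟨(isReduced_cons_cons.mp hax).1, hw'⟩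

theorem coWordGrammar_derives_identity {w : List (α × Bool)} (hw : mk w = 1) :
    (coWordGrammar α).Derives [nonterminal identity] (w.map terminal) := by
  induction hn : w.length using Nat.strong_induction_on generalizing w with | _ n ih =>
  subst hn
  cases w with
  | nil => exact derives_of_mem_rules (g := coWordGrammar α) (mem_coWordRules.mpr (.inl rfl))
  | cons a w =>
    obtain ⟨e, f, rfl, he, hf⟩ : ∃ e f, w = e ++ (a.1, !a.2) :: f ∧ Red e [] ∧ Red f [] := by
      have : Red (a :: w) [] := red_nil_iff_mk_eq_one.mpr hw
      rw [Red.cons_nil_iff_singleton] at this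
      exact Red.exists_eq_append_cons this
    have hr : ⟨identity, [terminal a, nonterminal identity, terminal (a.1, !a.2),
        nonterminal identity]⟩ ∈ (coWordGrammar α).rules :=
      mem_coWordRules.mpr (.inr (.inl ⟨a, rfl⟩))
    have := (derives_of_mem_rules hr).trans <| (Derives.refl [terminal a]).cons <|
      (ih e.length (by grind) (red_nil_iff_mk_eq_one.mp he) rfl).cons <|
      (Derives.refl _).cons <| (ih f.length (by grind) (red_nil_iff_mk_eq_one.mp hf) rfl).cons <|
      Derives.refl []
    simpa using this

theorem coWordGrammar_derives_after {a : α × Bool} {w : List (α × Bool)}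
    (hw : IsReduced (a :: reduce w)) :
    (coWordGrammar α).Derives [nonterminal (after a)] (w.map terminal) := by
  induction hr : reduce w generalizing a w with
  | nil =>
    have hr' : ⟨after a, [nonterminal identity]⟩ ∈ (coWordGrammar α).rules :=
      mem_coWordRules.mpr (.inr (.inr (.inr (.inl ⟨a, rfl⟩))))
    exact (derives_of_mem_rules hr').trans
      (coWordGrammar_derives_identity (by rw [← reduce.self, hr]; rfl))
  | cons x r ih =>
    rw [hr] at hw
    obtain ⟨hax, hx⟩ := isReduced_cons_cons.mp hw
    obtain ⟨e, w', rfl, he, hw'⟩ := exists_eq_append_cons_of_reduce_eq_cons hr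
    have hr' : ⟨after a, [nonterminal identity, terminal x, nonterminal (after x)]⟩ ∈
        (coWordGrammar α).rules :=
      mem_coWordRules.mpr (.inr (.inr (.inr (.inr
        ⟨a, x, isReduced_cons_cons.mpr ⟨hax, IsReduced.singleton⟩, rfl⟩))))
    have := (derives_of_mem_rules hr').trans <| (coWordGrammar_derives_identity he).cons <|
      (Derives.refl [terminal x]).cons <| (ih (hw' ▸ hx) hw').cons <| Derives.refl []
    simpa using this

theorem coWordGrammar_derives_nontrivial {w : List (α × Bool)} (hw : mk w ≠ 1) :
    (coWordGrammar α).Derives [nonterminal nontrivial] (w.map terminal) := by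
  obtain ⟨x, r, hr⟩ : ∃ x r, reduce w = x :: r := by
    refine List.exists_cons_of_ne_nil fun h => hw ?_
    rw [← reduce.self, h]; rfl
  obtain ⟨e, w', rfl, he, hw'⟩ := exists_eq_append_cons_of_reduce_eq_cons hr
  have hr' : ⟨nontrivial, [nonterminal identity, terminal x, nonterminal (after x)]⟩ ∈
      (coWordGrammar α).rules :=
    mem_coWordRules.mpr (.inr (.inr (.inl ⟨x, rfl⟩)))
  have hx : IsReduced (x :: reduce w') := by
    rw [hw', ← hr, ← toWord_mk]; exact isReduced_toWord
  have := (derives_of_mem_rules hr').trans <| (coWordGrammar_derives_identity he).cons <|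
    (Derives.refl [terminal x]).cons <| (coWordGrammar_derives_after hx).cons <| Derives.refl []
  simpa using this

variable (α) in
theorem isContextFree_setOf_mk_ne_one :
    Language.IsContextFree ({w | mk w ≠ 1} : Language (α × Bool)) :=
  ⟨coWordGrammar α, le_antisymm
    (language_le_of_forall_rule (g := coWordGrammar α) coWordLanguage_closed)
    fun _ hw => coWordGrammar_derives_nontrivial hw⟩

end CoWordGrammar

end FreeGroup

lemma wordInv_wordInv {X : Type} (v : List (Letter X)) : wordInv (wordInv v) = v := by
  simp [wordInv, linv, List.map_reverse, Function.comp_def]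

lemma mk_append_wordInv {X : Type} (u v : List (Letter X)) :
    FreeGroup.mk (u ++ wordInv v) = FreeGroup.mk u * (FreeGroup.mk v)⁻¹ := by
  rw [FreeGroup.inv_mk, FreeGroup.mul_mk]
  congr 2
  simp [wordInv, linv, FreeGroup.invRev, List.map_reverse]

/-- The co-word problem of the free group of finite rank is context-free. -/
theorem coWP_freeGroup_isContextFree (X : Type) [Fintype X] [DecidableEq X] :
    Language.IsContextFree
      ({w | ∃ u v : List (Letter X), w = encode u v ∧
        FreeGroup.mk u ≠ FreeGroup.mk v} : Language (HSym X)) := by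
  refine (congrArg Language.IsContextFree (Set.ext fun w => ⟨?_, ?_⟩)).mp
    (FreeGroup.isContextFree_setOf_mk_ne_one X).insertMarker
  · rintro ⟨s, t, hst, rfl⟩
    refine ⟨s, wordInv t, by rw [encode, wordInv_wordInv]; rfl, fun h => hst ?_⟩
    rw [← wordInv_wordInv t, mk_append_wordInv, h, mul_inv_cancel]
  · rintro ⟨u, v, rfl, huv⟩
    refine ⟨u, wordInv v, ?_, rfl⟩
    show FreeGroup.mk (u ++ wordInv v) ≠ 1
    rwa [mk_append_wordInv, Ne, mul_inv_eq_one]
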